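/- arXiv:1704.02393 — 2 statements merged into one kernel-verified Lean document; each statement's English description precedes it below -/
import Mathlib

section
/- For a single category: let w : I → ℝ≥0 and h ∈ ℕ≥1, and define g(S) = sum of the min(h,|S|) largest values of w on S. Then g is submodular: for A ⊆ B ⊆ I and e ∉ B, g(A ∪ {e}) − g(A) ≥ g(B ∪ {e}) − g(B). -/
open Finset

/-- Sum of the `k` largest elements of a finite multiset of reals
(all elements if fewer than `k`). -/
noncomputable def topSum (k : ℕ) (M : Multiset ℝ) : ℝ :=
  ((M.sort (· ≥ ·)).take k).sum

/-- Single-category top-`h` sum of weights `w` over a finite set `S`. -/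
noncomputable def topSet {I : Type*} (w : I → ℝ) (h : ℕ) (S : Finset I) : ℝ :=
  topSum h (S.val.map w)

/-- The `h`-th largest value of `w` on `S` (meaningful when `h ≤ S.card`). -/
noncomputable def kthLargest {I : Type*} (w : I → ℝ) (h : ℕ) (S : Finset I) : ℝ :=
  ((S.val.map w).sort (· ≥ ·)).getD (h - 1) 0

/-!
Write `h = k + 1` and let `t` be the `h`-th largest value of a multiset of nonnegative reals
(`0` if it has fewer than `h` elements). Inserting a new value `x ≥ 0` raises the top-`h` sum by
exactly `max (x - t) 0`: either `x` enters the top `h` and pushes `t` out, or it is not counted.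
Growing the multiset can only raise `t`, because the descending sort of a sub-multiset is a
sublist of the descending sort of the larger one. Hence the marginal gain of `e` over `B ⊇ A`
is at most that over `A`.
-/

namespace List

variable {α : Type*}

theorem sum_take_succ_eq_add_getD [AddMonoid α] (l : List α) (k : ℕ) :
    (l.take (k + 1)).sum = (l.take k).sum + l.getD k 0 := by
  induction l generalizing k with
  | nil => simp
  | cons a t ih => cases k <;> simp [ih, add_assoc]

section LinearOrder

variable [LinearOrder α] [Zero α] {l : List α}

theorem antitone_getD_of_pairwise_ge (hl : l.Pairwise (· ≥ ·)) (h0 : ∀ y ∈ l, 0 ≤ y) :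
    Antitone (l.getD · 0) := by
  refine antitone_nat_of_succ_le fun i => ?_
  induction l generalizing i with
  | nil => simp
  | cons a t ih =>
    rw [pairwise_cons] at hl
    cases i with
    | zero =>
      cases t with
      | nil => simpa using h0 a mem_cons_self
      | cons b t => simpa using hl.1 b mem_cons_self
    | succ i => simpa using ih hl.2 (fun y hy => h0 y (mem_cons_of_mem a hy)) i

theorem Sublist.getD_le_getD_of_pairwise_ge {l₁ l₂ : List α} (hsub : l₁ <+ l₂)
    (hl₂ : l₂.Pairwise (· ≥ ·)) (h0 : ∀ y ∈ l₂, 0 ≤ y) (i : ℕ) :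
    l₁.getD i 0 ≤ l₂.getD i 0 := by
  induction hsub generalizing i with
  | slnil => rfl
  | cons a _ ih =>
    calc _ ≤ _ := ih (pairwise_cons.1 hl₂).2 (fun y hy => h0 y (mem_cons_of_mem a hy)) i
      _ = _ := getD_cons_succ.symm
      _ ≤ _ := antitone_getD_of_pairwise_ge hl₂ h0 (Nat.le_succ i)
  | cons_cons a _ ih =>
    cases i with
    | zero => rfl
    | succ i =>
      simpa using ih (pairwise_cons.1 hl₂).2 (fun y hy => h0 y (mem_cons_of_mem a hy)) i

end LinearOrder

theorem sum_take_succ_orderedInsert [LinearOrder α] [AddCommMonoid α] {x : α} (hx : 0 ≤ x) :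
    ∀ {l : List α}, l.Pairwise (· ≥ ·) → (∀ y ∈ l, 0 ≤ y) → ∀ k : ℕ,
      ((l.orderedInsert (· ≥ ·) x).take (k + 1)).sum = (l.take k).sum + max x (l.getD k 0)
  | [], _, _, k => by simp [hx]
  | a :: t, hl, h0, k => by
    by_cases hxa : x ≥ a
    · rw [orderedInsert_cons_of_le _ _ hxa,
        max_eq_left ((antitone_getD_of_pairwise_ge hl h0 (Nat.zero_le k)).trans hxa)]
      simp [add_comm]
    · rw [orderedInsert_of_not_le _ _ hxa]
      cases k with
      | zero => simp [max_eq_right (le_of_not_ge hxa)]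
      | succ k =>
        simp [sum_take_succ_orderedInsert hx (pairwise_cons.1 hl).2
          (fun y hy => h0 y (mem_cons_of_mem a hy)) k, add_assoc]

end List

namespace Multiset

variable {α : Type*}

theorem sort_cons_eq_orderedInsert (r : α → α → Prop) [DecidableRel r] [IsTrans α r]
    [Std.Antisymm r] [Std.Total r] (a : α) (s : Multiset α) :
    (a ::ₘ s).sort r = (s.sort r).orderedInsert r a := by
  refine List.Perm.eq_of_pairwise' (pairwise_sort _ r) ((pairwise_sort s r).orderedInsert a _) ?_
  rw [← coe_eq_coe, sort_eq, coe_eq_coe.2 (List.perm_orderedInsert r a _), ← cons_coe, sort_eq]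

theorem sort_sublist_sort (r : α → α → Prop) [DecidableRel r] [IsTrans α r]
    [Std.Antisymm r] [Std.Total r] {s t : Multiset α} (hst : s ≤ t) :
    (s.sort r).Sublist (t.sort r) :=
  List.sublist_of_subperm_of_pairwise (coe_le.1 (by simpa using hst)) (pairwise_sort s r)
    (pairwise_sort t r)

theorem getD_sort_ge_mono [LinearOrder α] [Zero α] {s t : Multiset α} (hst : s ≤ t)
    (ht : ∀ y ∈ t, 0 ≤ y) (i : ℕ) :
    (s.sort (· ≥ ·)).getD i 0 ≤ (t.sort (· ≥ ·)).getD i 0 :=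
  (sort_sublist_sort _ hst).getD_le_getD_of_pairwise_ge (pairwise_sort t _)
    (fun y hy => ht y ((mem_sort _).1 hy)) i

end Multiset

theorem topSum_succ_cons_sub {M : Multiset ℝ} (k : ℕ) {x : ℝ} (hx : 0 ≤ x)
    (hM : ∀ y ∈ M, 0 ≤ y) :
    topSum (k + 1) (x ::ₘ M) - topSum (k + 1) M =
      max (x - (M.sort (· ≥ ·)).getD k 0) 0 := by
  have hM' : ∀ y ∈ M.sort (· ≥ ·), 0 ≤ y := fun y hy => hM y ((Multiset.mem_sort _).1 hy)
  rw [topSum, topSum, Multiset.sort_cons_eq_orderedInsert,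
    List.sum_take_succ_orderedInsert hx (Multiset.pairwise_sort M _) hM',
    List.sum_take_succ_eq_add_getD, add_sub_add_left_eq_sub, ← max_sub_sub_right, sub_self]

section TopSet

variable {I : Type*} {w : I → ℝ}

theorem topSet_insert_sub_topSet [DecidableEq I] (hw : ∀ v, 0 ≤ w v) {S : Finset I} {e : I}
    (he : e ∉ S) (k : ℕ) :
    topSet w (k + 1) (insert e S) - topSet w (k + 1) S =
      max (w e - kthLargest w (k + 1) S) 0 := by
  rw [topSet, insert_val_of_notMem he, Multiset.map_cons]
  exact topSum_succ_cons_sub k (hw e) (by simp [hw])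

theorem kthLargest_mono (hw : ∀ v, 0 ≤ w v) {S T : Finset I} (hST : S ⊆ T) (h : ℕ) :
    kthLargest w h S ≤ kthLargest w h T :=
  Multiset.getD_sort_ge_mono (Multiset.map_le_map (val_le_iff.2 hST)) (by simp [hw]) _

end TopSet

theorem top_h_single_category_submodular_general {I : Type*} [DecidableEq I]
    (w : I → ℝ) (hw : ∀ v, 0 ≤ w v) (h : ℕ)
    (A B : Finset I) (hAB : A ⊆ B) (e : I) (he : e ∉ B) :
    topSet w h (insert e A) - topSet w h A ≥
      topSet w h (insert e B) - topSet w h B := by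
  cases h with
  | zero => simp [topSet, topSum]
  | succ k =>
    rw [topSet_insert_sub_topSet hw he, topSet_insert_sub_topSet hw (fun heA => he (hAB heA))]
    gcongr
    exact kthLargest_mono hw hAB _

theorem top_h_single_category_submodular {I : Type*} [Fintype I] [DecidableEq I]
    (w : I → ℝ) (hw : ∀ v, 0 ≤ w v) (h : ℕ) (hh : 1 ≤ h)
    (A B : Finset I) (hAB : A ⊆ B) (e : I) (he : e ∉ B) :
    topSet w h (insert e A) - topSet w h A ≥
      topSet w h (insert e B) - topSet w h B :=
  top_h_single_category_submodular_general w hw h A B hAB e he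
end

section
/- The marginal gains of the full objective satisfy: for S ⊆ I with |S| ≥ max_c h_c and e ∉ S, F(S ∪ {e}) − F(S) = Σ_{c∈C} max(W(e,c) − τ_{h_c,c}(S), 0), where τ_{h_c,c}(S) is the h_c-th largest value of W(·,c) on S. -/
/-!
Sorting `S` in decreasing order, inserting `e` into the sorted list either leaves the first
`h` entries unchanged (when `W e` is at most the `h`-th entry `τ`) or pushes `τ` out of them
in favour of `W e`; in both cases the top-`h` sum grows by `max (W e - τ) 0`. The categories
do not interact, so the gains add up over `C`.
-/

open Finset

theorem Multiset.sort_cons_eq_orderedInsert_s14 {α : Type*} (r : α → α → Prop) [DecidableRel r]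
    [IsTrans α r] [Std.Antisymm r] [Std.Total r] (a : α) (s : Multiset α) :
    (a ::ₘ s).sort r = (s.sort r).orderedInsert r a := by
  refine Quot.inductionOn s fun l => ?_
  simp [List.mergeSort_eq_insertionSort]

theorem List.sum_take_succ_orderedInsert_ge {α : Type*} [AddCommGroup α] [LinearOrder α]
    [IsOrderedAddMonoid α] (a : α) :
    ∀ (L : List α), L.Pairwise (· ≥ ·) → ∀ (n : ℕ) (hn : n < L.length),
      ((L.orderedInsert (· ≥ ·) a).take (n + 1)).sum = (L.take (n + 1)).sum + max (a - L[n]) 0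
  | [], _, n, hn => by simp at hn
  | b :: L, hL, n, hn => by
    obtain ⟨hb, hL⟩ := List.pairwise_cons.1 hL
    rw [List.orderedInsert]
    split_ifs with hab
    · have hge : (b :: L)[n] ≤ a := by
        rcases n with _ | m
        · exact hab
        · exact (hb _ (List.getElem_mem _)).trans hab
      rw [List.take_succ_cons, List.sum_cons, List.sum_take_succ _ _ hn,
        max_eq_left (sub_nonneg.2 hge)]
      abel
    · rcases n with _ | m
      · simp [max_eq_right (sub_nonpos.2 (le_of_not_ge hab))]
      · rw [List.take_succ_cons, List.sum_cons,
          sum_take_succ_orderedInsert_ge a L hL m (by simpa using hn),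
          List.take_succ_cons, List.sum_cons, add_assoc, List.getElem_cons_succ]

theorem topSum_cons (a : ℝ) (M : Multiset ℝ) (n : ℕ) (hn : n < Multiset.card M) :
    topSum (n + 1) (a ::ₘ M) = topSum (n + 1) M + max (a - (M.sort (· ≥ ·)).getD n 0) 0 := by
  have hlen : n < (M.sort (· ≥ ·)).length := by rwa [Multiset.length_sort]
  rw [topSum, topSum, Multiset.sort_cons_eq_orderedInsert_s14,
    List.sum_take_succ_orderedInsert_ge a _ (Multiset.pairwise_sort _ _) n hlen,
    List.getD_eq_getElem _ _ hlen]

theorem topSet_insert {I : Type*} [DecidableEq I] (w : I → ℝ) {h : ℕ} (hh : 1 ≤ h)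
    {S : Finset I} (hS : h ≤ S.card) {e : I} (he : e ∉ S) :
    topSet w h (insert e S) = topSet w h S + max (w e - kthLargest w h S) 0 := by
  obtain ⟨n, rfl⟩ := Nat.exists_eq_add_of_le' hh
  rw [topSet, topSet, kthLargest, Finset.insert_val_of_notMem he, Multiset.map_cons,
    Nat.add_sub_cancel, topSum_cons _ _ _ (by simpa using hS)]

theorem full_objective_marginal_gain_general {I C : Type*} [Fintype C] [DecidableEq I]
    (W : I → C → ℝ)
    (h : C → ℕ) (hh : ∀ c, 1 ≤ h c)
    (S : Finset I) (hS : ∀ c, h c ≤ S.card) (e : I) (he : e ∉ S) :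
    (∑ c : C, topSet (fun v => W v c) (h c) (insert e S)) -
        (∑ c : C, topSet (fun v => W v c) (h c) S) =
      ∑ c : C, max (W e c - kthLargest (fun v => W v c) (h c) S) 0 := by
  rw [← Finset.sum_sub_distrib]
  refine Finset.sum_congr rfl fun c _ => ?_
  rw [topSet_insert _ (hh c) (hS c) he, add_sub_cancel_left]

theorem full_objective_marginal_gain {I C : Type*} [Fintype I] [Fintype C] [DecidableEq I]
    (W : I → C → ℝ) (hW : ∀ v c, 0 ≤ W v c)
    (h : C → ℕ) (hh : ∀ c, 1 ≤ h c)
    (S : Finset I) (hS : ∀ c, h c ≤ S.card) (e : I) (he : e ∉ S) :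
    (∑ c : C, topSet (fun v => W v c) (h c) (insert e S)) -
        (∑ c : C, topSet (fun v => W v c) (h c) S) =
      ∑ c : C, max (W e c - kthLargest (fun v => W v c) (h c) S) 0 :=
  full_objective_marginal_gain_general W h hh S hS e he
end
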